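/- Let f be holomorphic near z ∈ ℂ with f′(z) ≠ 0 and set N_z(t) = f′(z)(t − f(z)) / ((1/2)f″(z)(t − f(z)) + f′(z)²). Then for every fixed t ∈ ℂ for which the denominator (1/2)f″(z)(t − f(z)) + f′(z)² is nonzero, the partial derivative of N_z(t) with respect to z satisfies ∂_z N_z(t) = −1 − (1/2) S_f(z) N_z(t)², where S_f = f‴/f′ − (3/2)(f″/f′)² is the classical Schwarzian derivative of f. -/

import Mathlib

/-- The Möbius map `N_z(t) = f'(z)(t - f(z)) / ((1/2) f''(z)(t - f(z)) + f'(z)^2)`. -/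
noncomputable def tamanoiN (f : ℂ → ℂ) (z t : ℂ) : ℂ :=
  deriv f z * (t - f z) /
    ((1 / 2) * iteratedDeriv 2 f z * (t - f z) + (deriv f z) ^ 2)

/-- The classical Schwarzian derivative `S_f = f'''/f' - (3/2)(f''/f')^2`. -/
noncomputable def schwarzianDeriv (f : ℂ → ℂ) (z : ℂ) : ℂ :=
  iteratedDeriv 3 f z / deriv f z - (3 / 2) * (iteratedDeriv 2 f z / deriv f z) ^ 2

/-!
The quotient rule gives `∂_z N_z(t)` as a rational expression in `w = t - f(z)` and the
derivatives `a = f'(z)`, `b = f''(z)`, `c = f'''(z)`; with `D = b w / 2 + a²` its numerator is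
`b²w²/2 - a²bw - a⁴ - acw²/2 = -D² - (ac - 3b²/2) w² / 2`, which is the claimed formula.
-/

theorem AnalyticAt.hasDerivAt_iteratedDeriv {𝕜 F : Type*} [NontriviallyNormedField 𝕜]
    [NormedAddCommGroup F] [NormedSpace 𝕜 F] [CompleteSpace F] {f : 𝕜 → F} {x : 𝕜}
    (hf : AnalyticAt 𝕜 f x) (n : ℕ) :
    HasDerivAt (iteratedDeriv n f) (iteratedDeriv (n + 1) f x) x := by
  rw [iteratedDeriv_succ, iteratedDeriv_eq_iterate]
  exact (hf.iterated_deriv n).differentiableAt.hasDerivAt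

theorem hasDerivAt_tamanoiN {f : ℂ → ℂ} {z : ℂ} (t : ℂ) (hf : AnalyticAt ℂ f z)
    (hden : (1 / 2) * iteratedDeriv 2 f z * (t - f z) + (deriv f z) ^ 2 ≠ 0) :
    HasDerivAt (fun ζ => tamanoiN f ζ t)
      (((iteratedDeriv 2 f z * (t - f z) - deriv f z ^ 2) *
          ((1 / 2) * iteratedDeriv 2 f z * (t - f z) + deriv f z ^ 2) -
        deriv f z * (t - f z) *
          ((1 / 2) * iteratedDeriv 3 f z * (t - f z) +
            (3 / 2) * deriv f z * iteratedDeriv 2 f z)) /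
        ((1 / 2) * iteratedDeriv 2 f z * (t - f z) + deriv f z ^ 2) ^ 2) z := by
  have hf₀ : HasDerivAt f (deriv f z) z := hf.differentiableAt.hasDerivAt
  have hf₁ : HasDerivAt (deriv f) (iteratedDeriv 2 f z) z := by
    simpa only [iteratedDeriv_one] using hf.hasDerivAt_iteratedDeriv 1
  have hf₂ : HasDerivAt (iteratedDeriv 2 f) (iteratedDeriv 3 f z) z :=
    hf.hasDerivAt_iteratedDeriv 2
  have hw : HasDerivAt (fun ζ => t - f ζ) (-deriv f z) z := hf₀.const_sub t
  refine ((hf₁.fun_mul hw).fun_div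
    (((hf₂.const_mul (1 / 2)).fun_mul hw).fun_add (hf₁.fun_pow 2)) hden).congr_deriv ?_
  ring

theorem moebius_deriv_eq_schwarzian {K : Type*} [Field K] [CharZero K] {a b c w D : K}
    (ha : a ≠ 0) (hD : D ≠ 0) (hD_eq : D = 1 / 2 * b * w + a ^ 2) :
    ((b * w - a ^ 2) * D - a * w * (1 / 2 * c * w + 3 / 2 * a * b)) / D ^ 2 =
      -1 - 1 / 2 * (c / a - 3 / 2 * (b / a) ^ 2) * (a * w / D) ^ 2 := by
  field_simp
  rw [hD_eq]
  ring

/-- `∂_z N_z(t) = -1 - (1/2) S_f(z) N_z(t)^2`. -/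
theorem deriv_tamanoiN (f : ℂ → ℂ) (z t : ℂ) (hf : AnalyticAt ℂ f z)
    (hf' : deriv f z ≠ 0)
    (hden : (1 / 2) * iteratedDeriv 2 f z * (t - f z) + (deriv f z) ^ 2 ≠ 0) :
    deriv (fun ζ => tamanoiN f ζ t) z =
      -1 - (1 / 2) * schwarzianDeriv f z * (tamanoiN f z t) ^ 2 := by
  rw [(hasDerivAt_tamanoiN t hf hden).deriv, tamanoiN, schwarzianDeriv]
  exact moebius_deriv_eq_schwarzian hf' hden rfl
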